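/- Let H be a probability measure on ℝ with compact support contained in [0,∞) and let c > 0. Then Φ_{H,c} is 2-Lipschitz on 𝔻_{H,c}(∞) ∪ {z̄ : z ∈ 𝔻_{H,c}(∞)}: for all z₁, z₂ in this set, |Φ_{H,c}(z₁) − Φ_{H,c}(z₂)| ≤ 2·|z₁ − z₂|. -/

import Mathlib

open MeasureTheory Filter Complex Set

noncomputable section

/-- The Stieltjes transform of a measure on `ℝ`. -/
def St (μ : Measure ℝ) (z : ℂ) : ℂ := ∫ l, ((l : ℂ) - z)⁻¹ ∂μ

/-- The (topological) support of a measure on `ℝ`. -/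
def msupport (μ : Measure ℝ) : Set ℝ := {x : ℝ | ∀ U ∈ nhds x, 0 < μ U}

/-- `(H, c, ν)` satisfies the Marchenko–Pastur relation. -/
def MPRel (H : Measure ℝ) (c : ℝ) (ν : Measure ℝ) : Prop :=
  IsProbabilityMeasure H ∧ H ≠ Measure.dirac 0 ∧
  IsCompact (msupport H) ∧ msupport H ⊆ Set.Ici 0 ∧
  0 < c ∧
  IsProbabilityMeasure ν ∧ ν ≠ Measure.dirac 0 ∧
  IsCompact (msupport ν) ∧ msupport ν ⊆ Set.Ici 0 ∧
  ∀ z : ℂ, 0 < z.im →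
    St ν z = (∫ l, ((l : ℂ) * (1 - (c : ℂ) * z * St ν z - (c : ℂ)) - z)⁻¹ ∂H) ∧
    0 < ((c : ℂ) * St ν z + ((c : ℂ) - 1) / z).im

/-- The map `Φ_{H,c}`. -/
def Phi (H : Measure ℝ) (c : ℝ) (z : ℂ) : ℂ := (1 - (c : ℂ) * z * St H z - (c : ℂ)) * z

/-- The spectral domain `𝔻_{H,c}(∞)`. -/
def Dinf (H : Measure ℝ) (c : ℝ) : Set ℂ := {z : ℂ | 0 < z.im ∧ 0 < (Phi H c z).im}

/-- The companion transform `s_ν̲`. -/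
def sUnder (ν : Measure ℝ) (c : ℝ) (z : ℂ) : ℂ := (c : ℂ) * St ν z - (1 - (c : ℂ)) / z

/-- The map `φ_{ν,c}`. -/
def phiInv (ν : Measure ℝ) (c : ℝ) (z : ℂ) : ℂ := -1 / sUnder ν c z

/-! With `r_z(λ) = λ / (λ - z)` one has `Φ(z) = z (1 - c ∫ r_z dH)` for a probability measure `H`,
and `z₁ r_{z₁} - z₂ r_{z₂} = (z₁ - z₂) r_{z₁} r_{z₂}`, so
`Φ(z₁) - Φ(z₂) = (z₁ - z₂) (1 - c ∫ r_{z₁} r_{z₂} dH)`.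
Taking `z₂ = z̄₁` gives `Im Φ(z) = Im z (1 - c ∫ |r_z|² dH)`, hence `c ∫ |r_z|² dH < 1` on the domain
and its conjugate, and `|ab| ≤ (|a|² + |b|²) / 2` bounds the factor `|1 - c ∫ r_{z₁} r_{z₂} dH|` by `2`. -/

open scoped ComplexConjugate

def resolventRatio (z : ℂ) (l : ℝ) : ℂ := l / (l - z)

lemma ofReal_sub_ne_zero {z : ℂ} (hz : z.im ≠ 0) (l : ℝ) : (l : ℂ) - z ≠ 0 := by
  intro h
  exact hz (by simpa using (congrArg Complex.im h).symm)

lemma resolventRatio_eq_one_add {z : ℂ} (hz : z.im ≠ 0) (l : ℝ) :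
    resolventRatio z l = 1 + z * ((l : ℂ) - z)⁻¹ := by
  have := ofReal_sub_ne_zero hz l
  rw [resolventRatio]
  field_simp
  ring

lemma norm_resolventRatio_le {z : ℂ} (hz : z.im ≠ 0) (l : ℝ) :
    ‖resolventRatio z l‖ ≤ 1 + ‖z‖ / |z.im| := by
  have hdist : |z.im| ≤ ‖(l : ℂ) - z‖ := by simpa using abs_im_le_norm ((l : ℂ) - z)
  calc ‖resolventRatio z l‖ ≤ ‖(1 : ℂ)‖ + ‖z * ((l : ℂ) - z)⁻¹‖ := by
        rw [resolventRatio_eq_one_add hz]; exact norm_add_le _ _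
    _ = 1 + ‖z‖ / ‖(l : ℂ) - z‖ := by simp [div_eq_mul_inv]
    _ ≤ 1 + ‖z‖ / |z.im| := by gcongr

lemma continuous_resolventRatio {z : ℂ} (hz : z.im ≠ 0) : Continuous (resolventRatio z) :=
  continuous_ofReal.div (continuous_ofReal.sub continuous_const) (ofReal_sub_ne_zero hz)

lemma resolventRatio_conj (z : ℂ) (l : ℝ) :
    resolventRatio (conj z) l = conj (resolventRatio z l) := by
  simp [resolventRatio]

lemma mul_resolventRatio_sub_mul_resolventRatio {z₁ z₂ : ℂ} (h₁ : z₁.im ≠ 0) (h₂ : z₂.im ≠ 0)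
    (l : ℝ) : z₁ * resolventRatio z₁ l - z₂ * resolventRatio z₂ l
      = (z₁ - z₂) * (resolventRatio z₁ l * resolventRatio z₂ l) := by
  have := ofReal_sub_ne_zero h₁ l
  have := ofReal_sub_ne_zero h₂ l
  simp only [resolventRatio]
  field_simp
  ring

lemma im_mul_resolventRatio {z : ℂ} (hz : z.im ≠ 0) (l : ℝ) :
    (z * resolventRatio z l).im = z.im * ‖resolventRatio z l‖ ^ 2 := by
  have key := mul_resolventRatio_sub_mul_resolventRatio (z₂ := conj z) hz (by simpa using hz) l
  rw [resolventRatio_conj, ← map_mul, mul_conj, sub_conj, sub_conj, normSq_eq_norm_sq] at key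
  have h2 : ((2 * (z * resolventRatio z l).im : ℝ) : ℂ)
      = ((2 * (z.im * ‖resolventRatio z l‖ ^ 2) : ℝ) : ℂ) := by
    apply mul_right_cancel₀ I_ne_zero
    rw [key]
    push_cast
    ring
  have := ofReal_injective h2
  linarith

lemma norm_integral_mul_le_half_add {α E : Type*} [MeasurableSpace α] {μ : Measure α}
    [NormedRing E] [NormedSpace ℝ E] [CompleteSpace E] {f g : α → E}
    (hfg : Integrable (fun x => f x * g x) μ) (hf : Integrable (fun x => ‖f x‖ ^ 2) μ)
    (hg : Integrable (fun x => ‖g x‖ ^ 2) μ) :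
    ‖∫ x, f x * g x ∂μ‖ ≤ ((∫ x, ‖f x‖ ^ 2 ∂μ) + ∫ x, ‖g x‖ ^ 2 ∂μ) / 2 := by
  calc ‖∫ x, f x * g x ∂μ‖ ≤ ∫ x, ‖f x * g x‖ ∂μ := norm_integral_le_integral_norm _
    _ ≤ ∫ x, (‖f x‖ ^ 2 + ‖g x‖ ^ 2) / 2 ∂μ := by
      refine integral_mono hfg.norm ((hf.add hg).div_const 2) fun x => ?_
      have := norm_mul_le (f x) (g x)
      nlinarith [sq_nonneg (‖f x‖ - ‖g x‖)]
    _ = ((∫ x, ‖f x‖ ^ 2 ∂μ) + ∫ x, ‖g x‖ ^ 2 ∂μ) / 2 := by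
      rw [integral_div, integral_add hf hg]

section Integrability

variable {H : Measure ℝ} [IsFiniteMeasure H] {z z₁ z₂ : ℂ}

lemma integrable_resolventRatio (hz : z.im ≠ 0) : Integrable (resolventRatio z) H :=
  .of_bound (continuous_resolventRatio hz).aestronglyMeasurable _
    (ae_of_all _ (norm_resolventRatio_le hz))

lemma integrable_resolventRatio_mul (h₁ : z₁.im ≠ 0) (h₂ : z₂.im ≠ 0) :
    Integrable (fun l => resolventRatio z₁ l * resolventRatio z₂ l) H :=
  .of_bound
    ((continuous_resolventRatio h₁).mul (continuous_resolventRatio h₂)).aestronglyMeasurable _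
    (ae_of_all _ fun l => (norm_mul_le _ _).trans
      (mul_le_mul (norm_resolventRatio_le h₁ l) (norm_resolventRatio_le h₂ l) (norm_nonneg _)
        (by positivity)))

lemma integrable_norm_resolventRatio_sq (hz : z.im ≠ 0) :
    Integrable (fun l => ‖resolventRatio z l‖ ^ 2) H :=
  .of_bound ((continuous_resolventRatio hz).norm.pow 2).aestronglyMeasurable _
    (ae_of_all _ fun l => by
      rw [norm_pow, norm_norm]
      exact pow_le_pow_left₀ (norm_nonneg _) (norm_resolventRatio_le hz l) 2)

end Integrability

lemma im_ne_zero_of_mem_Dinf_union_conj {H : Measure ℝ} {c : ℝ} {z : ℂ}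
    (hz : z ∈ Dinf H c ∪ conj '' Dinf H c) : z.im ≠ 0 := by
  rcases hz with hz | ⟨w, hw, rfl⟩
  · exact hz.1.ne'
  · simpa using hw.1.ne'

section Phi

variable {H : Measure ℝ} [IsProbabilityMeasure H] {c : ℝ} {z z₁ z₂ : ℂ}

lemma Phi_eq (hz : z.im ≠ 0) : Phi H c z = z * (1 - c * ∫ l, resolventRatio z l ∂H) := by
  have hzSt : z * St H z = (∫ l, resolventRatio z l ∂H) - 1 := by
    have hpt : ∀ l : ℝ, z * ((l : ℂ) - z)⁻¹ = resolventRatio z l - 1 := fun l => by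
      rw [resolventRatio_eq_one_add hz]; ring
    simp_rw [St, ← integral_const_mul, hpt]
    rw [integral_sub (integrable_resolventRatio hz) (integrable_const _), integral_const,
      probReal_univ, one_smul]
  rw [Phi]
  linear_combination (-(c : ℂ) * z) * hzSt

lemma Phi_sub_Phi (h₁ : z₁.im ≠ 0) (h₂ : z₂.im ≠ 0) :
    Phi H c z₁ - Phi H c z₂
      = (z₁ - z₂) * (1 - c * ∫ l, resolventRatio z₁ l * resolventRatio z₂ l ∂H) := by
  have key : z₁ * (∫ l, resolventRatio z₁ l ∂H) - z₂ * ∫ l, resolventRatio z₂ l ∂H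
      = (z₁ - z₂) * ∫ l, resolventRatio z₁ l * resolventRatio z₂ l ∂H := by
    rw [← integral_const_mul, ← integral_const_mul, ← integral_const_mul, ← integral_sub
      ((integrable_resolventRatio h₁).const_mul _) ((integrable_resolventRatio h₂).const_mul _)]
    exact integral_congr_ae (ae_of_all _ (mul_resolventRatio_sub_mul_resolventRatio h₁ h₂))
  rw [Phi_eq h₁, Phi_eq h₂]
  linear_combination (-(c : ℂ)) * key

lemma im_Phi (hz : z.im ≠ 0) :
    (Phi H c z).im = z.im * (1 - c * ∫ l, ‖resolventRatio z l‖ ^ 2 ∂H) := by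
  have key : (z * ∫ l, resolventRatio z l ∂H).im = z.im * ∫ l, ‖resolventRatio z l‖ ^ 2 ∂H := by
    have him : (∫ l, z * resolventRatio z l ∂H).im = ∫ l, (z * resolventRatio z l).im ∂H :=
      (integral_im ((integrable_resolventRatio hz).const_mul z)).symm
    simp_rw [← integral_const_mul, him, im_mul_resolventRatio hz]
  rw [Phi_eq hz, show z * (1 - c * ∫ l, resolventRatio z l ∂H)
      = z - c * (z * ∫ l, resolventRatio z l ∂H) by ring, sub_im, im_ofReal_mul, key]
  ring

lemma mul_integral_norm_resolventRatio_sq_lt_one_of_mem_Dinf (hz : z ∈ Dinf H c) :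
    c * ∫ l, ‖resolventRatio z l‖ ^ 2 ∂H < 1 := by
  have hpos := hz.2
  rw [im_Phi hz.1.ne'] at hpos
  linarith [(pos_iff_pos_of_mul_pos hpos).mp hz.1]

lemma mul_integral_norm_resolventRatio_sq_lt_one (hz : z ∈ Dinf H c ∪ conj '' Dinf H c) :
    c * ∫ l, ‖resolventRatio z l‖ ^ 2 ∂H < 1 := by
  rcases hz with hz | ⟨w, hw, rfl⟩
  · exact mul_integral_norm_resolventRatio_sq_lt_one_of_mem_Dinf hz
  · simpa only [resolventRatio_conj, Complex.norm_conj] using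
      mul_integral_norm_resolventRatio_sq_lt_one_of_mem_Dinf hw

end Phi

theorem stmt16_general (H : MeasureTheory.Measure ℝ) (hprob : IsProbabilityMeasure H)
    (c : ℝ) (hc : 0 < c) :
    ∀ z₁ ∈ Dinf H c ∪ (starRingEnd ℂ) '' Dinf H c,
      ∀ z₂ ∈ Dinf H c ∪ (starRingEnd ℂ) '' Dinf H c,
        ‖Phi H c z₁ - Phi H c z₂‖ ≤ 2 * ‖z₁ - z₂‖ := by
  intro z₁ hz₁ z₂ hz₂
  have h₁ := im_ne_zero_of_mem_Dinf_union_conj hz₁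
  have h₂ := im_ne_zero_of_mem_Dinf_union_conj hz₂
  have hK₁ := mul_integral_norm_resolventRatio_sq_lt_one hz₁
  have hK₂ := mul_integral_norm_resolventRatio_sq_lt_one hz₂
  have hI := norm_integral_mul_le_half_add (μ := H) (integrable_resolventRatio_mul h₁ h₂)
    (integrable_norm_resolventRatio_sq h₁) (integrable_norm_resolventRatio_sq h₂)
  rw [Phi_sub_Phi h₁ h₂, norm_mul, mul_comm]
  gcongr
  calc ‖1 - (c : ℂ) * ∫ l, resolventRatio z₁ l * resolventRatio z₂ l ∂H‖
      ≤ 1 + c * ‖∫ l, resolventRatio z₁ l * resolventRatio z₂ l ∂H‖ := by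
        simpa [norm_mul, abs_of_pos hc] using
          norm_sub_le (1 : ℂ) (c * ∫ l, resolventRatio z₁ l * resolventRatio z₂ l ∂H)
    _ ≤ 2 := by nlinarith

theorem stmt16 (H : MeasureTheory.Measure ℝ) (hprob : IsProbabilityMeasure H)
    (hcomp : IsCompact (msupport H)) (hpos : msupport H ⊆ Set.Ici 0)
    (c : ℝ) (hc : 0 < c) :
    ∀ z₁ ∈ Dinf H c ∪ (starRingEnd ℂ) '' Dinf H c,
      ∀ z₂ ∈ Dinf H c ∪ (starRingEnd ℂ) '' Dinf H c,
        ‖Phi H c z₁ - Phi H c z₂‖ ≤ 2 * ‖z₁ - z₂‖ :=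
  stmt16_general H hprob c hc

end
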